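/- arXiv:1104.2684 — 3 statements merged into one kernel-verified Lean document; each statement's English description precedes it below -/
import Mathlib

section
/- Let N ≥ 1, let u : ℝ^N → ℂ be continuously differentiable, let t ≥ 0, and define v : ℝ^N → ℂ by v(y) = (1+t)^{N/2} u((1+t)y) e^{-i(1+t)|y|²/4}. Then ∫_{ℝ^N} |∇v(y)|² dy = (1/4) ∫_{ℝ^N} |x u(x) + 2i(1+t) ∇u(x)|² dx, where both sides are Lebesgue integrals of nonnegative functions (possibly +∞); here x u(x) + 2i(1+t)∇u(x) denotes the ℂ^N-valued function whose k-th component is x_k u(x) + 2i(1+t) ∂_k u(x). -/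
/-!
Write `a = 1 + t`. The chirp `e(y) = exp(-i a |y|² / 4)` has modulus one and derivative
`-(i a / 2) ⟪y, ·⟫ e`, so the product rule gives
`∂_k v(y) = a^{N/2} e(y) / (2i) · ((a y)_k u(a y) + 2 i a ∂_k u(a y))`.
Hence `|∇v(y)|² = (a^N / 4) G(a y)` with `G` the right-hand integrand, and the substitution
`x = a y`, whose Jacobian `a^{-N}` cancels `a^N`, gives the identity.
-/

open MeasureTheory Complex

noncomputable def chirp {E : Type*} [Norm E] (a : ℝ) (y : E) : ℂ :=
  exp (-(I * a * (‖y‖ : ℂ) ^ 2 / 4))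

lemma norm_chirp {E : Type*} [Norm E] (a : ℝ) (y : E) : ‖chirp a y‖ = 1 := by
  simp [chirp, Complex.norm_exp, ← ofReal_pow]

section InnerProductSpace

variable {E : Type*} [NormedAddCommGroup E] [InnerProductSpace ℝ E]

lemma hasFDerivAt_chirp (a : ℝ) (y : E) :
    HasFDerivAt (chirp a) ((-(I * a / 2) * chirp a y) • ofRealCLM.comp (innerSL ℝ y)) y := by
  have hsq : HasFDerivAt (fun z : E => ((‖z‖ ^ 2 : ℝ) : ℂ))
      (ofRealCLM.comp (2 • innerSL ℝ y)) y :=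
    ofRealCLM.hasFDerivAt.comp y ((hasFDerivAt_id y).norm_sq)
  have hchirp : chirp a = fun z : E => exp (-(I * a / 4) * ((‖z‖ ^ 2 : ℝ) : ℂ)) := by
    funext z; simp only [chirp]; push_cast; ring_nf
  rw [hchirp]
  convert (hsq.const_mul (-(I * a / 4))).cexp using 1
  ext w
  simp only [ofReal_pow, neg_mul, smul_apply, ContinuousLinearMap.comp_apply, coe_innerSL_apply,
    ofRealCLM_apply, smul_eq_mul, ContinuousLinearMap.comp_smul, nsmul_eq_mul, Nat.cast_ofNat,
    mul_neg, neg_inj]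
  ring

lemma fderiv_pseudoconformal_apply {u : E → ℂ} (c : ℂ) {a : ℝ} {y : E}
    (hu : DifferentiableAt ℝ u (a • y)) (w : E) :
    fderiv ℝ (fun z => c * u (a • z) * chirp a z) y w =
      c * chirp a y * (a * fderiv ℝ u (a • y) w - I * a * inner ℝ y w / 2 * u (a • y)) := by
  have hscale : HasFDerivAt (fun z : E => u (a • z))
      ((fderiv ℝ u (a • y)).comp (a • ContinuousLinearMap.id ℝ E)) y :=
    hu.hasFDerivAt.comp y ((hasFDerivAt_id y).const_smul a)
  have h : HasFDerivAt (fun z => c * u (a • z) * chirp a z) _ y :=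
    (hscale.const_mul c).mul (hasFDerivAt_chirp a y)
  rw [h.fderiv]
  simp only [neg_mul, ContinuousLinearMap.comp_smulₛₗ, Real.ringHom_apply,
    ContinuousLinearMap.comp_id, add_apply, smul_apply, ContinuousLinearMap.comp_apply,
    coe_innerSL_apply, ofRealCLM_apply, smul_eq_mul, mul_neg, real_smul]
  ring

lemma norm_fderiv_pseudoconformal_apply {u : E → ℂ} (c : ℂ) {a : ℝ} {y : E}
    (hu : DifferentiableAt ℝ u (a • y)) (w : E) :
    ‖fderiv ℝ (fun z => c * u (a • z) * chirp a z) y w‖ =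
      ‖c‖ / 2 * ‖(inner ℝ (a • y) w : ℂ) * u (a • y) + 2 * I * a * fderiv ℝ u (a • y) w‖ := by
  have h : (inner ℝ (a • y) w : ℂ) * u (a • y) + 2 * I * a * fderiv ℝ u (a • y) w =
      2 * I * (a * fderiv ℝ u (a • y) w - I * a * inner ℝ y w / 2 * u (a • y)) := by
    rw [real_inner_smul_left]; push_cast
    linear_combination ((a:ℂ) * inner ℝ y w * u (a • y)) * I_sq
  rw [h, fderiv_pseudoconformal_apply c hu, norm_mul, norm_mul, norm_mul, norm_mul, norm_chirp]
  simp only [mul_one, norm_ofNat, norm_I]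
  ring

end InnerProductSpace

lemma lintegral_comp_smul {E : Type*} [NormedAddCommGroup E] [NormedSpace ℝ E]
    [MeasurableSpace E] [BorelSpace E] [FiniteDimensional ℝ E] (μ : Measure E)
    [μ.IsAddHaarMeasure] (f : E → ENNReal) {r : ℝ} (hr : r ≠ 0) :
    ∫⁻ x, f (r • x) ∂μ = ENNReal.ofReal |(r ^ Module.finrank ℝ E)⁻¹| * ∫⁻ x, f x ∂μ := by
  let e : E ≃ᵐ E := (Homeomorph.smul (isUnit_iff_ne_zero.2 hr).unit).toMeasurableEquiv
  rw [← smul_eq_mul, ← lintegral_smul_measure, ← Measure.map_addHaar_smul μ hr]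
  exact (lintegral_map_equiv f e).symm

lemma sum_norm_sq_fderiv_pseudoconformal {N : ℕ} {u : EuclideanSpace ℝ (Fin N) → ℂ} (c : ℂ)
    {a : ℝ} {y : EuclideanSpace ℝ (Fin N)} (hu : DifferentiableAt ℝ u (a • y)) :
    ∑ k : Fin N,
        ‖fderiv ℝ (fun z => c * u (a • z) * chirp a z) y (EuclideanSpace.single k 1)‖ ^ 2 =
      ‖c‖ ^ 2 / 4 * ∑ k : Fin N, ‖(((a • y) k : ℝ) : ℂ) * u (a • y) +
        2 * I * (a : ℂ) * fderiv ℝ u (a • y) (EuclideanSpace.single k 1)‖ ^ 2 := by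
  rw [Finset.mul_sum]
  refine Finset.sum_congr rfl fun k _ => ?_
  rw [norm_fderiv_pseudoconformal_apply c hu, EuclideanSpace.inner_single_right]
  simp only [conj_trivial, one_mul]
  ring

theorem stmt3_general {N : ℕ} (u : EuclideanSpace ℝ (Fin N) → ℂ)
    (hu : ContDiff ℝ 1 u) (t : ℝ) (ht : 0 ≤ t)
    (v : EuclideanSpace ℝ (Fin N) → ℂ)
    (hv : ∀ y, v y = (((1 + t) ^ ((N:ℝ)/2) : ℝ) : ℂ) * u ((1 + t) • y) *
      Complex.exp (-(Complex.I * ((1 + t : ℝ) : ℂ) * (‖y‖:ℂ)^2 / 4))) :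
    ∫⁻ y, ENNReal.ofReal (∑ k : Fin N,
        ‖fderiv ℝ v y (EuclideanSpace.single k 1)‖ ^ 2) =
    ENNReal.ofReal (1/4) * ∫⁻ x, ENNReal.ofReal (∑ k : Fin N,
        ‖((x k : ℝ) : ℂ) * u x +
          2 * Complex.I * ((1 + t : ℝ) : ℂ) *
            fderiv ℝ u x (EuclideanSpace.single k 1)‖ ^ 2) := by
  set a : ℝ := 1 + t
  have ha : 0 < a := by positivity
  set F : EuclideanSpace ℝ (Fin N) → ℝ := fun x => ∑ k : Fin N,
    ‖((x k : ℝ) : ℂ) * u x + 2 * I * (a : ℂ) * fderiv ℝ u x (EuclideanSpace.single k 1)‖ ^ 2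
  have hnorm : ‖((a ^ ((N : ℝ) / 2) : ℝ) : ℂ)‖ ^ 2 = a ^ N := by
    rw [norm_real, Real.norm_of_nonneg (by positivity), ← Real.rpow_mul_natCast ha.le]
    norm_num
  have hv' : v = fun z => ((a ^ ((N : ℝ) / 2) : ℝ) : ℂ) * u (a • z) * chirp a z := funext hv
  have hpoint (y) : ∑ k : Fin N, ‖fderiv ℝ v y (EuclideanSpace.single k 1)‖ ^ 2 =
      a ^ N / 4 * F (a • y) := by
    rw [hv', sum_norm_sq_fderiv_pseudoconformal _ ((hu.differentiable one_ne_zero) _), hnorm]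
  calc ∫⁻ y, ENNReal.ofReal (∑ k : Fin N, ‖fderiv ℝ v y (EuclideanSpace.single k 1)‖ ^ 2)
      = ENNReal.ofReal (a ^ N / 4) * ∫⁻ y, ENNReal.ofReal (F (a • y)) := by
        simp_rw [hpoint, ENNReal.ofReal_mul (by positivity : 0 ≤ a ^ N / 4)]
        exact lintegral_const_mul' _ _ ENNReal.ofReal_ne_top
    _ = ENNReal.ofReal (1 / 4) * ∫⁻ x, ENNReal.ofReal (F x) := by
        rw [lintegral_comp_smul volume (fun x => ENNReal.ofReal (F x)) ha.ne',
          finrank_euclideanSpace_fin, ← mul_assoc, ← ENNReal.ofReal_mul (by positivity),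
          abs_of_pos (by positivity)]
        field_simp

/-- `∫ |∇v|² = (1/4) ∫ |x u + 2i(1+t)∇u|²` for the spatial
pseudoconformal transform `v` of `u` at time `t`. -/
theorem stmt3 {N : ℕ} (hN : 1 ≤ N) (u : EuclideanSpace ℝ (Fin N) → ℂ)
    (hu : ContDiff ℝ 1 u) (t : ℝ) (ht : 0 ≤ t)
    (v : EuclideanSpace ℝ (Fin N) → ℂ)
    (hv : ∀ y, v y = (((1 + t) ^ ((N:ℝ)/2) : ℝ) : ℂ) * u ((1 + t) • y) *
      Complex.exp (-(Complex.I * ((1 + t : ℝ) : ℂ) * (‖y‖:ℂ)^2 / 4))) :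
    ∫⁻ y, ENNReal.ofReal (∑ k : Fin N,
        ‖fderiv ℝ v y (EuclideanSpace.single k 1)‖ ^ 2) =
    ENNReal.ofReal (1/4) * ∫⁻ x, ENNReal.ofReal (∑ k : Fin N,
        ‖((x k : ℝ) : ℂ) * u x +
          2 * Complex.I * ((1 + t : ℝ) : ℂ) *
            fderiv ℝ u x (EuclideanSpace.single k 1)‖ ^ 2) :=
  stmt3_general u hu t ht v hv
end

section
/- Let N ≥ 1, let 0 < p ≤ 1, and let f, g ∈ L²(ℝ^N; ℂ). Then the functions |f|^p f and |g|^p g belong to L^{2/(p+1)}(ℝ^N; ℂ), and ‖ |f|^p f − |g|^p g ‖_{L^{2/(p+1)}} ≤ (p+1)(‖f‖_{L²}^p + ‖g‖_{L²}^p) ‖f − g‖_{L²}. In particular, the map f ↦ |f|^p f is continuous from L²(ℝ^N; ℂ) to L^{2/(p+1)}(ℝ^N; ℂ). -/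
/-!
Pointwise, `‖a‖^p a - ‖b‖^p b = ‖a‖^p (a - b) + (‖a‖^p - ‖b‖^p) b` when `‖b‖ ≤ ‖a‖`, and
concavity of `t ↦ t^p` (Bernoulli's inequality) bounds the second term by `p ‖a‖^p ‖a - b‖`.
Integrating, Hölder's inequality with `(p+1)/2 = p/2 + 1/2`, Minkowski's inequality in
`L^{2/p}` (a norm, since `2/p ≥ 1`) and `‖ |f|^p ‖_{2/p} = ‖f‖₂^p` give the
estimate in `L^{2/(p+1)}`.
-/

open MeasureTheory
open scoped ENNReal

theorem Real.rpow_sub_rpow_mul_le {p : ℝ} (hp0 : 0 < p) (hp1 : p ≤ 1) {a b : ℝ} (hb : 0 ≤ b)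
    (hba : b ≤ a) : (a ^ p - b ^ p) * b ≤ p * a ^ p * (a - b) := by
  have ha : 0 ≤ a := hb.trans hba
  have hab : 0 ≤ a - b := sub_nonneg.2 hba
  rcases hb.eq_or_lt with rfl | hb
  · simp only [mul_zero, sub_zero]
    positivity
  have hbp : 0 < b ^ p := Real.rpow_pos_of_pos hb p
  -- concavity of `t ↦ t ^ p` at `b`: `a ^ p ≤ b ^ p + p b ^ (p - 1) (a - b)`
  have hbernoulli : a ^ p / b ^ p ≤ 1 + p * ((a - b) / b) := by
    have hs : -1 ≤ (a - b) / b := by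
      have := div_nonneg hab hb.le
      linarith
    have h := rpow_one_add_le_one_add_mul_self hs hp0.le hp1
    rwa [show 1 + (a - b) / b = a / b by field_simp; ring, Real.div_rpow ha hb.le] at h
  have htangent : (a ^ p - b ^ p) * b ≤ p * b ^ p * (a - b) := by
    rw [div_le_iff₀ hbp] at hbernoulli
    have := mul_le_mul_of_nonneg_right hbernoulli hb.le
    have hexp : (1 + p * ((a - b) / b)) * b ^ p * b = b ^ p * b + p * b ^ p * (a - b) := by
      field_simp
    nlinarith
  have hmono : b ^ p ≤ a ^ p := Real.rpow_le_rpow hb.le hba hp0.le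
  nlinarith [mul_le_mul_of_nonneg_right (mul_le_mul_of_nonneg_left hmono hp0.le) hab]

section NormedSpace

variable {E : Type*} [NormedAddCommGroup E] [NormedSpace ℝ E]

theorem norm_rpow_smul_self {p : ℝ} (hp : 0 ≤ p) (a : E) : ‖‖a‖ ^ p • a‖ = ‖a‖ ^ (p + 1) := by
  rw [norm_smul, Real.norm_of_nonneg (by positivity), Real.rpow_add_one' (norm_nonneg a) (by linarith)]

theorem norm_rpow_smul_sub_rpow_smul_le_of_norm_le {p : ℝ} (hp0 : 0 < p) (hp1 : p ≤ 1) {a b : E}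
    (hba : ‖b‖ ≤ ‖a‖) :
    ‖‖a‖ ^ p • a - ‖b‖ ^ p • b‖ ≤ (p + 1) * (‖a‖ ^ p + ‖b‖ ^ p) * ‖a - b‖ := by
  have hmono : ‖b‖ ^ p ≤ ‖a‖ ^ p := Real.rpow_le_rpow (norm_nonneg b) hba hp0.le
  have hsplit : ‖a‖ ^ p • a - ‖b‖ ^ p • b = ‖a‖ ^ p • (a - b) + (‖a‖ ^ p - ‖b‖ ^ p) • b := by
    rw [smul_sub, sub_smul]; abel
  have hconcave := Real.rpow_sub_rpow_mul_le hp0 hp1 (norm_nonneg b) hba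
  have hap : 0 ≤ ‖a‖ ^ p := by positivity
  have hbp : 0 ≤ ‖b‖ ^ p := by positivity
  have hdiff : ‖a‖ - ‖b‖ ≤ ‖a - b‖ := norm_sub_norm_le a b
  calc ‖‖a‖ ^ p • a - ‖b‖ ^ p • b‖
      ≤ ‖a‖ ^ p * ‖a - b‖ + (‖a‖ ^ p - ‖b‖ ^ p) * ‖b‖ := by
        rw [hsplit]
        refine (norm_add_le _ _).trans_eq ?_
        rw [norm_smul, norm_smul, Real.norm_of_nonneg hap, Real.norm_of_nonneg (sub_nonneg.2 hmono)]
    _ ≤ ‖a‖ ^ p * ‖a - b‖ + p * ‖a‖ ^ p * ‖a - b‖ := by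
        nlinarith [mul_le_mul_of_nonneg_left hdiff (by positivity : 0 ≤ p * ‖a‖ ^ p)]
    _ ≤ (p + 1) * (‖a‖ ^ p + ‖b‖ ^ p) * ‖a - b‖ := by
        nlinarith [mul_nonneg (mul_nonneg (by linarith : (0 : ℝ) ≤ p + 1) hbp) (norm_nonneg (a - b))]

theorem norm_rpow_smul_sub_rpow_smul_le {p : ℝ} (hp0 : 0 < p) (hp1 : p ≤ 1) (a b : E) :
    ‖‖a‖ ^ p • a - ‖b‖ ^ p • b‖ ≤ (p + 1) * (‖a‖ ^ p + ‖b‖ ^ p) * ‖a - b‖ := by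
  rcases le_total ‖b‖ ‖a‖ with hba | hab
  · exact norm_rpow_smul_sub_rpow_smul_le_of_norm_le hp0 hp1 hba
  · rw [← norm_neg, neg_sub, add_comm (‖a‖ ^ p), ← norm_neg (a - b), neg_sub]
    exact norm_rpow_smul_sub_rpow_smul_le_of_norm_le hp0 hp1 hab

end NormedSpace

theorem ENNReal.holderTriple_div_ofReal {p : ℝ} (hp : 0 < p) (q : ℝ≥0∞) :
    ENNReal.HolderTriple (q / ENNReal.ofReal p) q (q / ENNReal.ofReal (p + 1)) := by
  constructor
  rw [ENNReal.inv_div (.inl ENNReal.ofReal_ne_top) (.inl (ENNReal.ofReal_pos.2 hp).ne'),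
    ENNReal.inv_div (.inl ENNReal.ofReal_ne_top) (.inl (ENNReal.ofReal_pos.2 (by linarith)).ne'),
    ENNReal.ofReal_add hp.le zero_le_one, ENNReal.ofReal_one, ← ENNReal.div_add_div_same, one_div]

namespace MeasureTheory

variable {α E : Type*} [MeasurableSpace α] {μ : Measure α} [NormedAddCommGroup E]
  {p : ℝ} {q : ℝ≥0∞}

theorem eLpNorm_norm_rpow_div (u : α → E) (hp : 0 < p) :
    eLpNorm (fun x => ‖u x‖ ^ p) (q / ENNReal.ofReal p) μ = eLpNorm u q μ ^ p := by
  rw [eLpNorm_norm_rpow u hp,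
    ENNReal.div_mul_cancel (ENNReal.ofReal_pos.2 hp).ne' ENNReal.ofReal_ne_top]

variable [NormedSpace ℝ E]

theorem MemLp.norm_rpow_smul {u : α → E} (hu : MemLp u q μ) (hp : 0 ≤ p) :
    MemLp (fun x => ‖u x‖ ^ p • u x) (q / ENNReal.ofReal (p + 1)) μ := by
  have h := hu.norm_rpow_div (ENNReal.ofReal (p + 1))
  rw [ENNReal.toReal_ofReal (by linarith)] at h
  refine h.of_le ((hu.1.norm.aemeasurable.pow_const p).aestronglyMeasurable.smul hu.1)
    (.of_forall fun x => ?_)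
  rw [norm_rpow_smul_self hp, Real.norm_of_nonneg (by positivity)]

theorem eLpNorm_rpow_smul_sub_rpow_smul_le (hp0 : 0 < p) (hp1 : p ≤ 1)
    (hpq : ENNReal.ofReal p ≤ q) {f g : α → E}
    (hf : AEStronglyMeasurable f μ) (hg : AEStronglyMeasurable g μ) :
    eLpNorm (fun x => ‖f x‖ ^ p • f x - ‖g x‖ ^ p • g x) (q / ENNReal.ofReal (p + 1)) μ ≤
      ENNReal.ofReal (p + 1) * (eLpNorm f q μ ^ p + eLpNorm g q μ ^ p) * eLpNorm (f - g) q μ := by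
  have := ENNReal.holderTriple_div_ofReal hp0 q
  have hpf := (hf.norm.aemeasurable.pow_const p).aestronglyMeasurable
  have hpg := (hg.norm.aemeasurable.pow_const p).aestronglyMeasurable
  have hq : 1 ≤ q / ENNReal.ofReal p := by
    rwa [ENNReal.le_div_iff_mul_le (.inr ((ENNReal.ofReal_pos.2 hp0).trans_le hpq).ne')
      (.inl ENNReal.ofReal_ne_top), one_mul]
  set φ : α → ℝ := fun x => (p + 1) * (‖f x‖ ^ p + ‖g x‖ ^ p)
  have hφ : eLpNorm φ (q / ENNReal.ofReal p) μ ≤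
      ENNReal.ofReal (p + 1) * (eLpNorm f q μ ^ p + eLpNorm g q μ ^ p) := by
    refine (eLpNorm_const_smul_le (c := p + 1) (f := fun x => ‖f x‖ ^ p + ‖g x‖ ^ p)).trans ?_
    rw [Real.enorm_of_nonneg (by linarith), ← eLpNorm_norm_rpow_div f hp0,
      ← eLpNorm_norm_rpow_div g hp0]
    gcongr
    exact eLpNorm_add_le hpf hpg hq
  calc _ ≤ eLpNorm (φ • (f - g)) (q / ENNReal.ofReal (p + 1)) μ := by
        refine eLpNorm_mono fun x => ?_
        rw [Pi.smul_apply', norm_smul, Real.norm_of_nonneg (by positivity)]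
        exact norm_rpow_smul_sub_rpow_smul_le hp0 hp1 (f x) (g x)
    _ ≤ eLpNorm φ (q / ENNReal.ofReal p) μ * eLpNorm (f - g) q μ :=
        eLpNorm_smul_le_mul_eLpNorm (hf.sub hg) ((hpf.add hpg).const_smul (p + 1))
    _ ≤ _ := by gcongr

end MeasureTheory

theorem stmt6_general {N : ℕ} (p : ℝ) (hp0 : 0 < p) (hp1 : p ≤ 1)
    (f g : EuclideanSpace ℝ (Fin N) → ℂ)
    (hf : MemLp f 2 volume) (hg : MemLp g 2 volume) :
    MemLp (fun x => ((‖f x‖ ^ p : ℝ) : ℂ) * f x)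
      (ENNReal.ofReal (2/(p+1))) volume ∧
    MemLp (fun x => ((‖g x‖ ^ p : ℝ) : ℂ) * g x)
      (ENNReal.ofReal (2/(p+1))) volume ∧
    eLpNorm (fun x => ((‖f x‖ ^ p : ℝ) : ℂ) * f x -
        ((‖g x‖ ^ p : ℝ) : ℂ) * g x) (ENNReal.ofReal (2/(p+1))) volume ≤
      ENNReal.ofReal ((p+1) *
        ((eLpNorm f 2 volume).toReal ^ p + (eLpNorm g 2 volume).toReal ^ p) *
        (eLpNorm (f - g) 2 volume).toReal) := by
  have hp1' : 0 ≤ p + 1 := by linarith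
  have hr : ENNReal.ofReal (2 / (p + 1)) = 2 / ENNReal.ofReal (p + 1) := by
    rw [ENNReal.ofReal_div_of_pos (by linarith), ENNReal.ofReal_ofNat]
  have hp2 : ENNReal.ofReal p ≤ 2 := by
    rw [← ENNReal.ofReal_ofNat 2]
    exact ENNReal.ofReal_le_ofReal (by linarith)
  simp only [← Complex.real_smul, hr]
  refine ⟨hf.norm_rpow_smul hp0.le, hg.norm_rpow_smul hp0.le,
    (eLpNorm_rpow_smul_sub_rpow_smul_le hp0 hp1 hp2 hf.1 hg.1).trans_eq ?_⟩
  rw [ENNReal.ofReal_mul (by positivity), ENNReal.ofReal_mul hp1',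
    ENNReal.ofReal_add (Real.rpow_nonneg ENNReal.toReal_nonneg p)
      (Real.rpow_nonneg ENNReal.toReal_nonneg p),
    ← ENNReal.ofReal_rpow_of_nonneg ENNReal.toReal_nonneg hp0.le,
    ← ENNReal.ofReal_rpow_of_nonneg ENNReal.toReal_nonneg hp0.le,
    ENNReal.ofReal_toReal hf.2.ne, ENNReal.ofReal_toReal hg.2.ne,
    ENNReal.ofReal_toReal (hf.sub hg).2.ne]

/-- for `0 < p ≤ 1` and `f, g ∈ L²(ℝ^N; ℂ)`, the functions `|f|^p f` and
`|g|^p g` belong to `L^{2/(p+1)}`, with the Lipschitz-type estimate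
`‖|f|^p f − |g|^p g‖_{L^{2/(p+1)}} ≤ (p+1)(‖f‖₂^p + ‖g‖₂^p)‖f − g‖₂`. -/
theorem stmt6 {N : ℕ} (hN : 1 ≤ N) (p : ℝ) (hp0 : 0 < p) (hp1 : p ≤ 1)
    (f g : EuclideanSpace ℝ (Fin N) → ℂ)
    (hf : MemLp f 2 volume) (hg : MemLp g 2 volume) :
    MemLp (fun x => ((‖f x‖ ^ p : ℝ) : ℂ) * f x)
      (ENNReal.ofReal (2/(p+1))) volume ∧
    MemLp (fun x => ((‖g x‖ ^ p : ℝ) : ℂ) * g x)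
      (ENNReal.ofReal (2/(p+1))) volume ∧
    eLpNorm (fun x => ((‖f x‖ ^ p : ℝ) : ℂ) * f x -
        ((‖g x‖ ^ p : ℝ) : ℂ) * g x) (ENNReal.ofReal (2/(p+1))) volume ≤
      ENNReal.ofReal ((p+1) *
        ((eLpNorm f 2 volume).toReal ^ p + (eLpNorm g 2 volume).toReal ^ p) *
        (eLpNorm (f - g) 2 volume).toReal) :=
  stmt6_general p hp0 hp1 f g hf hg
end

section
/- Let M, N : [0,1) → ℝ be continuously differentiable with M(0) = N(0) = 0, M'(s) ≥ 0 and N'(s) ≥ 0 for all s ∈ [0,1). Let a, b and C₀ be real constants with 0 < b ≤ a and C₀ ≥ 0, and suppose that (1−s)(M'(s) + N'(s)) ≤ a M(s) + b N(s) + C₀ for all s ∈ [0,1). Then a M(s) + b N(s) ≤ C₀((1−s)^{-a} − 1) for all s ∈ [0,1). -/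
/-- the Gronwall-type lemma: if `M, N` are C¹ on `[0,1)`, vanish at `0`,
are nondecreasing, `0 < b ≤ a`, `C₀ ≥ 0`, and `(1−s)(M'+N') ≤ aM + bN + C₀`, then
`aM(s) + bN(s) ≤ C₀((1−s)^{-a} − 1)` on `[0,1)`. -/
theorem stmt8 (M N M' N' : ℝ → ℝ) (a b C₀ : ℝ)
    (hb : 0 < b) (hba : b ≤ a) (hC₀ : 0 ≤ C₀)
    (hM0 : M 0 = 0) (hN0 : N 0 = 0)
    (hM : ∀ s ∈ Set.Ico (0:ℝ) 1, HasDerivAt M (M' s) s)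
    (hN : ∀ s ∈ Set.Ico (0:ℝ) 1, HasDerivAt N (N' s) s)
    (hM'c : ContinuousOn M' (Set.Ico 0 1)) (hN'c : ContinuousOn N' (Set.Ico 0 1))
    (hM' : ∀ s ∈ Set.Ico (0:ℝ) 1, 0 ≤ M' s)
    (hN' : ∀ s ∈ Set.Ico (0:ℝ) 1, 0 ≤ N' s)
    (hineq : ∀ s ∈ Set.Ico (0:ℝ) 1, (1 - s) * (M' s + N' s) ≤ a * M s + b * N s + C₀) :
    ∀ s ∈ Set.Ico (0:ℝ) 1, a * M s + b * N s ≤ C₀ * ((1 - s) ^ (-a) - 1) := by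
  intro t ht
  obtain ⟨ht0, ht1⟩ := ht
  have ha : 0 < a := lt_of_lt_of_le hb hba
  set g : ℝ → ℝ := fun s => (a * M s + b * N s + C₀) * (1 - s) ^ a with hgdef
  set g' : ℝ → ℝ := fun s => (a * M' s + b * N' s) * (1 - s) ^ a
      + (a * M s + b * N s + C₀) * (-1 * a * (1 - s) ^ (a - 1)) with hg'def
  have hgderiv : ∀ s ∈ Set.Ico (0:ℝ) 1, HasDerivAt g (g' s) s := by
    intro s hs
    have h1s : (0:ℝ) < 1 - s := by linarith [hs.2]
    have hφ : HasDerivAt (fun s : ℝ => (1 - s) ^ a) (-1 * a * (1 - s) ^ (a - 1)) s := by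
      have hlin : HasDerivAt (fun s : ℝ => 1 - s) (-1) s := by
        simpa using (hasDerivAt_id s).const_sub 1
      exact hlin.rpow_const (Or.inl h1s.ne')
    have hh : HasDerivAt (fun s => a * M s + b * N s + C₀) (a * M' s + b * N' s) s :=
      (((hM s hs).const_mul a).add ((hN s hs).const_mul b)).add_const C₀
    exact hh.mul hφ
  have hg'nonpos : ∀ s ∈ Set.Ico (0:ℝ) 1, g' s ≤ 0 := by
    intro s hs
    have h1s : (0:ℝ) < 1 - s := by linarith [hs.2]
    have hpow : (0:ℝ) < (1 - s) ^ (a - 1) := Real.rpow_pos_of_pos h1s _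
    have hsplit : (1 - s) ^ a = (1 - s) ^ (a - 1) * (1 - s) := by
      rw [← Real.rpow_add_one h1s.ne' (a - 1)]; ring_nf
    have key : (1 - s) * (a * M' s + b * N' s) ≤ a * (a * M s + b * N s + C₀) := by
      have h1 := hineq s hs
      have h2 : a * M' s + b * N' s ≤ a * (M' s + N' s) := by
        nlinarith [hN' s hs]
      nlinarith [hM' s hs, hN' s hs]
    have : g' s = (1 - s) ^ (a - 1) *
        ((1 - s) * (a * M' s + b * N' s) - a * (a * M s + b * N s + C₀)) := by
      simp only [hg'def, hsplit]; ring
    rw [this]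
    exact mul_nonpos_of_nonneg_of_nonpos hpow.le (by linarith)
  have hsub : Set.Icc (0:ℝ) t ⊆ Set.Ico (0:ℝ) 1 := fun x hx =>
    ⟨hx.1, lt_of_le_of_lt hx.2 ht1⟩
  have hanti : AntitoneOn g (Set.Icc 0 t) := by
    apply antitoneOn_of_deriv_nonpos (convex_Icc 0 t)
    · exact fun x hx => ((hgderiv x (hsub hx)).continuousAt).continuousWithinAt
    · intro x hx
      rw [interior_Icc] at hx
      exact ((hgderiv x (hsub ⟨hx.1.le, hx.2.le⟩)).differentiableAt).differentiableWithinAt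
    · intro x hx
      rw [interior_Icc] at hx
      rw [(hgderiv x (hsub ⟨hx.1.le, hx.2.le⟩)).deriv]
      exact hg'nonpos x (hsub ⟨hx.1.le, hx.2.le⟩)
  have hgt : g t ≤ g 0 := hanti (Set.left_mem_Icc.mpr ht0) ⟨ht0, le_refl t⟩ ht0
  have hg0 : g 0 = C₀ := by simp [hgdef, hM0, hN0]
  have h1t : (0:ℝ) < 1 - t := by linarith
  have hpow : (0:ℝ) < (1 - t) ^ a := Real.rpow_pos_of_pos h1t a
  have hneg : (1 - t) ^ (-a) = ((1 - t) ^ a)⁻¹ := Real.rpow_neg h1t.le a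
  rw [hg0] at hgt
  have : a * M t + b * N t + C₀ ≤ C₀ * ((1 - t) ^ a)⁻¹ := by
    rw [← le_div_iff₀ hpow] at hgt
    simpa [div_eq_mul_inv] using hgt
  rw [hneg]
  linarith
end
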